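/- arXiv:math/0210432 — 3 statements merged into one kernel-verified Lean document; each statement's English description precedes it below -/
import Mathlib

section
/- Let M = ⊕_{i∈ℤ} M_i be a graded vector space over a field of characteristic 0, with linear operators D, D*, δ such that D has degree +1, D* has degree −1, D* is locally nilpotent, δ acts on M_d as multiplication by d, and [D*,D] = 2δ, [δ,D] = D, [δ,D*] = −D*. Then for every d < 0, M_d = (D*)^{1−d} M_1, i.e., M_d is the image of M_1 under D* applied (1−d) times. -/
/-- Hypotheses making `(M, D, Dst)` a graded `sl₂`-module in the sense of Roitman:
`M : ℤ → Submodule k V` is a grading of `V` (independent, spanning), `D` has degree `+1`,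
`Dst` (i.e. `D*`) has degree `-1` and is locally nilpotent, the grading operator `δ` acts on
`M d` as `d`, and `[D*, D] = 2δ` (the relations `[δ,D]=D`, `[δ,D*]=-D*` are automatic from the
degrees of `D` and `D*`). -/
structure SL2GradedModule (k V : Type*) [Field k] [CharZero k] [AddCommGroup V] [Module k V]
    (M : ℤ → Submodule k V) (D Dst : V →ₗ[k] V) : Prop where
  indep : iSupIndep M
  spans : (⨆ d, M d) = ⊤
  D_deg : ∀ (d : ℤ), ∀ v ∈ M d, D v ∈ M (d + 1)
  Dst_deg : ∀ (d : ℤ), ∀ v ∈ M d, Dst v ∈ M (d - 1)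
  Dst_nilpotent : ∀ v : V, ∃ n : ℕ, (Dst ^ n) v = 0
  comm : ∀ (d : ℤ), ∀ v ∈ M d, Dst (D v) - D (Dst v) = (2 * d) • v

section Aux

variable {k V : Type*} [Field k] [CharZero k] [AddCommGroup V] [Module k V]
  {M : ℤ → Submodule k V} {D Dst : V →ₗ[k] V}

lemma SL2GradedModule.D_pow_deg (h : SL2GradedModule k V M D Dst) :
    ∀ (n : ℕ) (d : ℤ), ∀ v ∈ M d, (D ^ n) v ∈ M (d + n) := by
  intro n
  induction n with
  | zero => intro d v hv; simpa using hv
  | succ n ih =>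
    intro d v hv
    have h1 : (D ^ (n + 1)) v = (D ^ n) (D v) := by
      rw [pow_succ, Module.End.mul_apply]
    rw [h1]
    have := ih (d + 1) (D v) (h.D_deg d v hv)
    have he : (d + 1 + (n : ℤ)) = d + ((n : ℕ) + 1 : ℕ) := by push_cast; ring
    rwa [he] at this

lemma SL2GradedModule.Dst_pow_deg (h : SL2GradedModule k V M D Dst) :
    ∀ (n : ℕ) (d : ℤ), ∀ v ∈ M d, (Dst ^ n) v ∈ M (d - n) := by
  intro n
  induction n with
  | zero => intro d v hv; simpa using hv
  | succ n ih =>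
    intro d v hv
    have h1 : (Dst ^ (n + 1)) v = (Dst ^ n) (Dst v) := by
      rw [pow_succ, Module.End.mul_apply]
    rw [h1]
    have := ih (d - 1) (Dst v) (h.Dst_deg d v hv)
    have he : (d - 1 - (n : ℤ)) = d - ((n : ℕ) + 1 : ℕ) := by push_cast; ring
    rwa [he] at this

lemma SL2GradedModule.comm_pow (h : SL2GradedModule k V M D Dst) :
    ∀ (n : ℕ) (d : ℤ), ∀ v ∈ M d,
      Dst ((D ^ (n + 1)) v) =
        (D ^ (n + 1)) (Dst v) + (((n : ℤ) + 1) * (2 * d + n)) • (D ^ n) v := by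
  intro n
  induction n with
  | zero =>
    intro d v hv
    have := h.comm d v hv
    have h2 : Dst (D v) = D (Dst v) + (2 * d) • v := by
      rw [← this]; abel
    simpa using h2
  | succ n ih =>
    intro d v hv
    have h1 : ∀ w : V, (D ^ (n + 2)) w = (D ^ (n + 1)) (D w) := by
      intro w; rw [pow_succ, Module.End.mul_apply]
    rw [show ((n:ℕ)+1+1) = n + 2 from rfl, h1 v]
    rw [ih (d + 1) (D v) (h.D_deg d v hv)]
    have hc : Dst (D v) = D (Dst v) + (2 * d) • v := by
      have := h.comm d v hv; rw [← this]; abel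
    rw [hc, map_add, map_zsmul]
    have h2 : (D ^ (n + 1)) (D (Dst v)) = (D ^ (n + 2)) (Dst v) := (h1 (Dst v)).symm
    have h3 : (D ^ n) (D v) = (D ^ (n + 1)) v := by
      rw [pow_succ, Module.End.mul_apply]
    rw [h2, h3]
    have hcoef : (2 * d) • ((D ^ (n + 1)) v) +
        (((n : ℤ) + 1) * (2 * (d + 1) + n)) • (D ^ (n + 1)) v =
        (((n : ℤ) + 1 + 1) * (2 * d + ((n : ℤ) + 1))) • (D ^ (n + 1)) v := by
      rw [← add_smul]; congr 1; ring
    push_cast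
    rw [add_assoc, hcoef]

lemma SL2GradedModule.prim_pow (h : SL2GradedModule k V M D Dst)
    (d : ℤ) (v : V) (hv : v ∈ M d) (hp : Dst v = 0) :
    ∀ n : ℕ, (Dst ^ n) ((D ^ n) v) =
      (∏ j ∈ Finset.range n, (((j : ℤ) + 1) * (2 * d + j))) • v := by
  intro n
  induction n with
  | zero => simp
  | succ n ih =>
    have h1 : (Dst ^ (n + 1)) ((D ^ (n + 1)) v) = (Dst ^ n) (Dst ((D ^ (n + 1)) v)) := by
      rw [pow_succ, Module.End.mul_apply]
    rw [h1, h.comm_pow n d v hv, hp, map_zero, zero_add, map_zsmul, ih,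
      smul_smul, Finset.prod_range_succ]
    congr 1
    ring

lemma SL2GradedModule.prim_mem (h : SL2GradedModule k V M D Dst)
    (d : ℤ) (hd : d < 0) (v : V) (hv : v ∈ M d) (hp : Dst v = 0) :
    v ∈ Submodule.map (Dst ^ (1 - d).toNat) (M 1) := by
  set N := (1 - d).toNat with hNdef
  have hN : (N : ℤ) = 1 - d := Int.toNat_of_nonneg (by omega)
  have hDv : (D ^ N) v ∈ M 1 := by
    have := h.D_pow_deg N d v hv
    have he : d + (N : ℤ) = 1 := by omega
    rwa [he] at this
  set c : ℤ := ∏ j ∈ Finset.range N, (((j : ℤ) + 1) * (2 * d + j)) with hcdef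
  have hc : c ≠ 0 := by
    rw [hcdef]
    apply Finset.prod_ne_zero_iff.2
    intro j hj
    have hj' : j < N := Finset.mem_range.1 hj
    have hj'' : (j : ℤ) < (N : ℤ) := by exact_mod_cast hj'
    apply mul_ne_zero
    · omega
    · omega
  have key : (Dst ^ N) ((D ^ N) v) = c • v := h.prim_pow d v hv hp N
  refine ⟨((c : k))⁻¹ • (D ^ N) v, Submodule.smul_mem _ _ hDv, ?_⟩
  rw [map_smul, key, ← Int.cast_smul_eq_zsmul k, smul_smul,
    inv_mul_cancel₀ (by exact_mod_cast hc), one_smul]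

lemma SL2GradedModule.main_ind (h : SL2GradedModule k V M D Dst) :
    ∀ (n : ℕ) (d : ℤ), d < 0 → ∀ v ∈ M d, (Dst ^ n) v = 0 →
      v ∈ Submodule.map (Dst ^ (1 - d).toNat) (M 1) := by
  intro n
  induction n with
  | zero =>
    intro d hd v hv h0
    simp only [pow_zero, Module.End.one_apply] at h0
    rw [h0]
    exact Submodule.zero_mem _
  | succ n ih =>
    intro d hd v hv h0
    have hx : (Dst ^ n) (Dst v) = 0 := by
      rw [← Module.End.mul_apply, ← pow_succ]; exact h0
    obtain ⟨u, hu, hux⟩ := ih (d - 1) (by omega) (Dst v) (h.Dst_deg d v hv) hx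
    set N := (1 - d).toNat with hNdef
    have hNat : (1 - (d - 1)).toNat = N + 1 := by omega
    rw [hNat] at hux
    have hy : Dst v = Dst ((Dst ^ N) u) := by
      rw [← hux, pow_succ', Module.End.mul_apply]
    have hyd : (Dst ^ N) u ∈ M d := by
      have := h.Dst_pow_deg N 1 u hu
      have he : (1 : ℤ) - (N : ℤ) = d := by
        have : (N : ℤ) = 1 - d := Int.toNat_of_nonneg (by omega)
        omega
      rwa [he] at this
    have hprim : Dst (v - (Dst ^ N) u) = 0 := by
      rw [map_sub, hy, sub_self]
    have h1 := h.prim_mem d hd _ (Submodule.sub_mem _ hv hyd) hprim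
    have h2 : (Dst ^ N) u ∈ Submodule.map (Dst ^ N) (M 1) := ⟨u, hu, rfl⟩
    have h3 := Submodule.add_mem _ h1 h2
    simpa using h3

end Aux

/-- For `d < 0`, the degree-`d` component is the image of `M 1` under the
`(1 - d)`-fold iterate of `D*`. -/
theorem negative_components_from_M1
    {k V : Type*} [Field k] [CharZero k] [AddCommGroup V] [Module k V]
    (M : ℤ → Submodule k V) (D Dst : V →ₗ[k] V)
    (h : SL2GradedModule k V M D Dst) :
    ∀ d : ℤ, d < 0 → M d = Submodule.map (Dst ^ (1 - d).toNat) (M 1) := by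
  intro d hd
  apply le_antisymm
  · intro v hv
    obtain ⟨n, hn⟩ := h.Dst_nilpotent v
    exact h.main_ind n d hd v hv hn
  · rintro v ⟨u, hu, rfl⟩
    have := h.Dst_pow_deg (1 - d).toNat 1 u hu
    have he : (1 : ℤ) - ((1 - d).toNat : ℤ) = d := by
      have : ((1 - d).toNat : ℤ) = 1 - d := Int.toNat_of_nonneg (by omega)
      omega
    rwa [he] at this
end

section
/- Let A be a graded vertex algebra with a locally nilpotent operator D* of degree −1 satisfying D*𝟙 = 0 and [D*, a(m)] = (2d−m−2)a(m+1) + (D*a)(m) for a ∈ A_d. Then the operators D, D*, and the grading derivation δ (δ|_{A_d} = d) satisfy [D*,D] = 2δ, [δ,D] = D, [δ,D*] = −D*, i.e. they span a copy of sl₂. -/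
/-- The binomial coefficient `C(m, s)` for an arbitrary integer `m`
(`C(m,s) = m(m-1)⋯(m-s+1)/s!`, extended to negative `m`). -/
def zchoose (m : ℤ) (s : ℕ) : ℤ :=
  if 0 ≤ m then (m.toNat.choose s : ℤ) else (-1) ^ s * (((s : ℤ) - 1 - m).toNat.choose s : ℤ)

/-- A vertex algebra over a field `k` of characteristic zero, following Roitman's
Definition 1.1: bilinear products `mul n : a ⊗ b ↦ a(n)b`, a unit `one = 𝟙` with
`𝟙(n)a = δ_{n,-1} a` and `a(n)𝟙 = D^{(-n-1)} a` where `D a = a(-2)𝟙`,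
the derivation properties of `D`, and the commutator formula. -/
structure VA (k V : Type*) [Field k] [CharZero k] [AddCommGroup V] [Module k V] where
  mul : ℤ → V →ₗ[k] V →ₗ[k] V
  one : V
  trunc : ∀ a b : V, ∃ N : ℕ, ∀ n : ℤ, (N : ℤ) ≤ n → mul n a b = 0
  unit_left : ∀ (n : ℤ) (a : V), mul n one a = if n = -1 then a else 0
  unit_right_nonneg : ∀ (n : ℤ) (a : V), 0 ≤ n → mul n a one = 0
  unit_right : ∀ (n : ℕ) (a : V),
    mul (-(n : ℤ) - 1) a one = ((n.factorial : k))⁻¹ • (fun x => mul (-2) x one)^[n] a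
  D_deriv : ∀ (n : ℤ) (a b : V),
    mul (-2) (mul n a b) one = mul n (mul (-2) a one) b + mul n a (mul (-2) b one)
  D_mul : ∀ (n : ℤ) (a b : V), mul n (mul (-2) a one) b = (-n) • mul (n - 1) a b
  comm : ∀ (m n : ℤ) (a b c : V) (N : ℕ), (∀ p : ℤ, (N : ℤ) ≤ p → mul p a b = 0) →
    mul m a (mul n b c) - mul n b (mul m a c)
      = ∑ s ∈ Finset.range N, zchoose m s • mul (m + n - (s : ℤ)) (mul (s : ℤ) a b) c

namespace VA

variable {k V : Type*} [Field k] [CharZero k] [AddCommGroup V] [Module k V]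

/-- The translation operator `D a = a(-2)𝟙`. -/
def D (A : VA k V) : V → V := fun a => A.mul (-2) a A.one

end VA

/-- A vertex algebra graded by the integers: `A_i(n)A_j ⊆ A_{i+j-n-1}` and `𝟙 ∈ A_0`. -/
structure GradedVA (k V : Type*) [Field k] [CharZero k] [AddCommGroup V] [Module k V]
    extends VA k V where
  deg : ℤ → Submodule k V
  indep : iSupIndep deg
  spans : (⨆ d, deg d) = ⊤
  one_mem : one ∈ deg 0
  mul_mem : ∀ (i j n : ℤ) (a b : V), a ∈ deg i → b ∈ deg j →
    mul n a b ∈ deg (i + j - n - 1)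

/-- A graded vertex algebra with an operator `D* = Dst` of degree `-1` satisfying
`D*𝟙 = 0` and `[D*, a(m)] = (2d - m - 2) a(m+1) + (D*a)(m)` for `a ∈ A_d`
(no local nilpotency assumed). -/
structure PreSL2VA (k V : Type*) [Field k] [CharZero k] [AddCommGroup V] [Module k V]
    extends GradedVA k V where
  Dst : V →ₗ[k] V
  Dst_deg : ∀ (d : ℤ) (a : V), a ∈ deg d → Dst a ∈ deg (d - 1)
  Dst_one : Dst one = 0
  Dst_comm : ∀ (d : ℤ) (a : V), a ∈ deg d → ∀ (m : ℤ) (b : V),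
    Dst (mul m a b) - mul m a (Dst b)
      = (2 * d - m - 2) • mul (m + 1) a b + mul m (Dst a) b

/-- A graded vertex algebra with `sl₂`-structure: as above, with `D*` locally nilpotent. -/
structure SL2VA (k V : Type*) [Field k] [CharZero k] [AddCommGroup V] [Module k V]
    extends PreSL2VA k V where
  Dst_nil : ∀ a : V, ∃ n : ℕ, (Dst ^ n) a = 0

/-- The operators `D`, `D*` and the grading derivation `δ` (acting as `d` on `A_d`) satisfy the
`sl₂` relations `[D*,D] = 2δ`, `[δ,D] = D`, `[δ,D*] = -D*`, checked on homogeneous elements. -/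
theorem sl2_relations {k V : Type*} [Field k] [CharZero k] [AddCommGroup V] [Module k V]
    (A : SL2VA k V) (d : ℤ) (a : V) (ha : a ∈ A.deg d) :
    A.Dst (A.D a) - A.D (A.Dst a) = (2 * d) • a ∧
      ((d + 1 : ℤ) • A.D a) - A.D ((d : ℤ) • a) = A.D a ∧
      ((d - 1 : ℤ) • A.Dst a) - A.Dst ((d : ℤ) • a) = -(A.Dst a) := by
  have hmul1 : A.mul (-1) a A.one = a := by
    have h := A.unit_right 0 a
    simpa using h
  have hcomm := A.Dst_comm d a ha (-2) A.one
  rw [A.Dst_one] at hcomm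
  have hD : ∀ x : V, A.D x = A.mul (-2) x A.one := fun _ => rfl
  refine ⟨?_, ?_, ?_⟩
  · have : A.Dst (A.D a) - A.D (A.Dst a)
        = (2 * d - (-2) - 2) • A.mul (-2 + 1) a A.one := by
      rw [hD, hD]
      have := hcomm
      simp only [map_zero] at this
      linear_combination (norm := module) this
    rw [this]
    norm_num
    rw [hmul1]
  · have : A.D ((d : ℤ) • a) = (d : ℤ) • A.D a := by
      rw [hD, hD, map_zsmul, LinearMap.smul_apply]
    rw [this]
    module
  · rw [map_zsmul]
    module
end

section
/- Let A be a graded vertex algebra with sl₂-structure and suppose A is generated by minimal elements (elements a with D*a = 0). Then any operator D* satisfying the commutation relation [D*, a(m)] = (2 deg a − m − 2)a(m+1) + (D*a)(m) and D*𝟙 = 0 is automatically locally nilpotent. -/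
/-- If a graded vertex algebra with an operator `D*` satisfying the `sl₂` commutation relation
is generated by minimal elements (`D*a = 0`), then `D*` is automatically locally nilpotent.
Generation means: any subspace containing `𝟙` and closed under left multiplication by the
minimal homogeneous generators is all of `A`. -/
theorem Dst_locally_nilpotent_of_minimal_generation
    {k V : Type*} [Field k] [CharZero k] [AddCommGroup V] [Module k V]
    (A : PreSL2VA k V) (G : Set V)
    (hGmin : ∀ g ∈ G, A.Dst g = 0 ∧ ∃ d : ℤ, g ∈ A.deg d)
    (hGgen : ∀ P : Submodule k V, A.one ∈ P →
      (∀ g ∈ G, ∀ (n : ℤ), ∀ b ∈ P, A.mul n g b ∈ P) → P = ⊤) :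
    ∀ a : V, ∃ n : ℕ, (A.Dst ^ n) a = 0 := by
  classical
  have mono : ∀ (c : V) (p q : ℕ), p ≤ q → (A.Dst ^ p) c = 0 → (A.Dst ^ q) c = 0 := by
    intro c p q hpq h
    have hq : A.Dst ^ q = A.Dst ^ (q - p) * A.Dst ^ p := by
      rw [← pow_add, Nat.sub_add_cancel hpq]
    rw [hq, Module.End.mul_apply, h, map_zero]
  let P : Submodule k V :=
    { carrier := {x | ∃ n : ℕ, (A.Dst ^ n) x = 0}
      add_mem' := by
        rintro x y ⟨p, hp⟩ ⟨q, hq⟩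
        exact ⟨max p q, by rw [map_add, mono x p _ (le_max_left p q) hp,
          mono y q _ (le_max_right p q) hq, add_zero]⟩
      zero_mem' := ⟨0, by simp⟩
      smul_mem' := by
        rintro c x ⟨p, hp⟩
        exact ⟨p, by rw [map_smul, hp, smul_zero]⟩ }
  have hP : P = ⊤ := by
    apply hGgen
    · exact ⟨1, by simpa using A.Dst_one⟩
    · intro g hg m b hb
      obtain ⟨hDg, d, hd⟩ := hGmin g hg
      obtain ⟨N, hN⟩ := hb
      -- key spanning lemma
      have key : ∀ (n : ℕ) (m : ℤ) (b : V), (A.Dst ^ n) (A.mul m g b) ∈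
          Submodule.span k
            {x : V | ∃ i : ℕ, i ≤ n ∧ x = A.mul (m + (i : ℤ)) g ((A.Dst ^ (n - i)) b)} := by
        intro n
        induction n with
        | zero =>
          intro m b
          exact Submodule.subset_span ⟨0, le_refl 0, by simp⟩
        | succ n ih =>
          intro m b
          have hzero : A.mul m (A.Dst g) b = 0 := by
            rw [hDg, map_zero, LinearMap.zero_apply]
          have hcomm := A.Dst_comm d g hd m b
          rw [hzero, add_zero, sub_eq_iff_eq_add] at hcomm
          have hstep : (A.Dst ^ (n + 1)) (A.mul m g b)
              = (2 * d - m - 2) • (A.Dst ^ n) (A.mul (m + 1) g b)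
                + (A.Dst ^ n) (A.mul m g (A.Dst b)) := by
            rw [pow_succ, Module.End.mul_apply, hcomm, map_add, map_zsmul]
          rw [hstep]
          refine Submodule.add_mem _ ?_ ?_
          · rw [← Int.cast_smul_eq_zsmul k]
            refine Submodule.smul_mem _ _ ?_
            refine Submodule.span_le.mpr ?_ (ih (m + 1) b)
            rintro _ ⟨i, hi, rfl⟩
            apply Submodule.subset_span
            refine ⟨i + 1, by omega, ?_⟩
            rw [show n + 1 - (i + 1) = n - i from by omega]
            push_cast
            rw [show m + ((i : ℤ) + 1) = m + 1 + (i : ℤ) from by ring]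
          · refine Submodule.span_le.mpr ?_ (ih m (A.Dst b))
            rintro _ ⟨i, hi, rfl⟩
            apply Submodule.subset_span
            refine ⟨i, by omega, ?_⟩
            rw [show n + 1 - i = (n - i) + 1 from by omega, pow_succ, Module.End.mul_apply]
      -- choose truncation bounds
      have hf : ∀ j : ℕ, ∀ p : ℤ,
          (((A.trunc g ((A.Dst ^ j) b)).choose : ℤ)) ≤ p → A.mul p g ((A.Dst ^ j) b) = 0 :=
        fun j => (A.trunc g ((A.Dst ^ j) b)).choose_spec
      set f : ℕ → ℕ := fun j => (A.trunc g ((A.Dst ^ j) b)).choose with hfdef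
      set M : ℕ := (Finset.range N).sup f with hM
      set n : ℕ := N + ((M : ℤ) - m).toNat with hn
      refine ⟨n, ?_⟩
      have hsub : {x : V | ∃ i : ℕ, i ≤ n ∧ x = A.mul (m + (i : ℤ)) g ((A.Dst ^ (n - i)) b)}
          ⊆ ({0} : Set V) := by
        rintro _ ⟨i, hi, rfl⟩
        by_cases hc : N ≤ n - i
        · rw [Set.mem_singleton_iff, mono b N (n - i) hc hN, map_zero]
        · push_neg at hc
          have hjM : f (n - i) ≤ M := Finset.le_sup (Finset.mem_range.mpr hc)
          have hle : ((f (n - i) : ℤ)) ≤ m + (i : ℤ) := by omega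
          rw [Set.mem_singleton_iff]
          exact hf (n - i) (m + (i : ℤ)) hle
      have hmem := Submodule.span_mono hsub (key n m b)
      rw [Submodule.span_zero_singleton, Submodule.mem_bot] at hmem
      exact hmem
  intro a
  have ha : a ∈ P := hP ▸ Submodule.mem_top
  exact ha
end
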